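/- arXiv:1604.00663 — 2 statements merged into one kernel-verified Lean document; each statement's English description precedes it below -/
import Mathlib

section
/- For every n ≥ 1, the variance of the Gepner statistic over W(n,n,n) equals n⁴/4; that is, (1/|W(n,n,n)|) Σ_{w ∈ W(n,n,n)} (gep(w) − n³/2)² = n⁴/4 (as an identity in ℚ). -/
/-- The Gepner statistic of a word `w` over a totally ordered alphabet:
the number of triples of positions `i < j < k` such that `w_i w_j w_k`
reduces to one of the odd permutations `132`, `213`, `321`. -/
def gep {α : Type*} [LinearOrder α] (w : List α) : ℕ :=
  (Finset.univ.filter (fun t : Fin w.length × Fin w.length × Fin w.length =>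
    t.1 < t.2.1 ∧ t.2.1 < t.2.2 ∧
      ((w.get t.1 < w.get t.2.2 ∧ w.get t.2.2 < w.get t.2.1) ∨
       (w.get t.2.1 < w.get t.1 ∧ w.get t.1 < w.get t.2.2) ∨
       (w.get t.2.2 < w.get t.2.1 ∧ w.get t.2.1 < w.get t.1)))).card

/-- `W a1 a2 a3` is the (finite) set of words over the alphabet `{1,2,3}`
with exactly `a1` occurrences of `1`, `a2` occurrences of `2` and
`a3` occurrences of `3`. -/
def W (a1 a2 a3 : ℕ) : Finset (List ℕ) :=
  ((List.replicate a1 1 ++ List.replicate a2 2 ++ List.replicate a3 3).permutations).toFinset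
namespace GepAux

def q1 (r : ℕ → ℤ) (w : List ℕ) : ℤ := ∑ i : Fin w.length, r (w.get i)

def q2 (r : ℕ → ℕ → ℤ) (w : List ℕ) : ℤ :=
  ∑ i : Fin w.length, ∑ j : Fin w.length, if i < j then r (w.get i) (w.get j) else 0

def q3 (r : ℕ → ℕ → ℕ → ℤ) (w : List ℕ) : ℤ :=
  ∑ i : Fin w.length, ∑ j : Fin w.length, ∑ k : Fin w.length,
    if i < j ∧ j < k then r (w.get i) (w.get j) (w.get k) else 0

lemma q1_cons (r : ℕ → ℤ) (x : ℕ) (w : List ℕ) : q1 r (x :: w) = r x + q1 r w := by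
  simp [q1, Fin.sum_univ_succ, List.length_cons]

lemma q2_cons (r : ℕ → ℕ → ℤ) (x : ℕ) (w : List ℕ) :
    q2 r (x :: w) = q1 (r x) w + q2 r w := by
  simp [q2, q1, Fin.sum_univ_succ, List.length_cons, Fin.succ_lt_succ_iff]

lemma q3_cons (r : ℕ → ℕ → ℕ → ℤ) (x : ℕ) (w : List ℕ) :
    q3 r (x :: w) = q2 (r x) w + q3 r w := by
  simp [q3, q2, Fin.sum_univ_succ, List.length_cons, Fin.succ_lt_succ_iff]

lemma q1_congr {r r' : ℕ → ℤ} {w : List ℕ} (h : ∀ x ∈ w, r x = r' x) : q1 r w = q1 r' w :=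
  Finset.sum_congr rfl fun _ _ => h _ (w.get_mem ..)

lemma q2_congr {r r' : ℕ → ℕ → ℤ} {w : List ℕ} (h : ∀ x ∈ w, ∀ y ∈ w, r x y = r' x y) :
    q2 r w = q2 r' w := by
  refine Finset.sum_congr rfl fun i _ => Finset.sum_congr rfl fun j _ => ?_
  split_ifs with hij
  · exact h _ (w.get_mem ..) _ (w.get_mem ..)
  · rfl

lemma q1_const_mul (k : ℤ) (r : ℕ → ℤ) (w : List ℕ) :
    q1 (fun v => k * r v) w = k * q1 r w := by
  unfold q1; rw [Finset.mul_sum]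

def ind (a x : ℕ) : ℤ := if x = a then 1 else 0

def C (a : ℕ) (w : List ℕ) : ℤ := q1 (ind a) w

def P (a b : ℕ) (w : List ℕ) : ℤ := q2 (fun u v => ind a u * ind b v) w

lemma C_cons (a x : ℕ) (w : List ℕ) : C a (x :: w) = ind a x + C a w := q1_cons ..

lemma P_cons (a b x : ℕ) (w : List ℕ) : P a b (x :: w) = ind a x * C b w + P a b w := by
  rw [P, q2_cons, q1_const_mul]; rfl

lemma C_eq_count (a : ℕ) (w : List ℕ) : C a w = (w.count a : ℤ) := by
  induction w with
  | nil => rfl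
  | cons x w ih => rw [C_cons, ih, List.count_cons]; simp [ind]; ring

lemma PC (a b : ℕ) (hab : a ≠ b) (w : List ℕ) : P a b w + P b a w = C a w * C b w := by
  induction w with
  | nil => rfl
  | cons x w ih =>
    rw [P_cons, P_cons, C_cons, C_cons]
    have : ind a x * ind b x = 0 := by
      simp only [ind]; split_ifs with h1 h2 <;> simp_all
    linear_combination ih - this

def rgep : ℕ → ℕ → ℕ → ℤ := fun u v t =>
  if (u < t ∧ t < v) ∨ (v < u ∧ u < t) ∨ (t < v ∧ v < u) then 1 else 0

lemma gep_eq_q3 (w : List ℕ) : (gep w : ℤ) = q3 rgep w := by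
  rw [gep, Finset.card_filter]
  push_cast
  rw [Fintype.sum_prod_type]
  simp_rw [Fintype.sum_prod_type]
  unfold q3 rgep
  refine Finset.sum_congr rfl fun i _ => Finset.sum_congr rfl fun j _ =>
    Finset.sum_congr rfl fun k _ => ?_
  by_cases h1 : i < j <;> by_cases h2 : j < k <;>
    by_cases h3 : (w.get i < w.get k ∧ w.get k < w.get j) ∨
      (w.get j < w.get i ∧ w.get i < w.get k) ∨
      (w.get k < w.get j ∧ w.get j < w.get i) <;>
    simp [h1, h2, h3]

/-- Alphabet condition -/
def Alph (w : List ℕ) : Prop := ∀ x ∈ w, x = 1 ∨ x = 2 ∨ x = 3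

lemma Alph_cons {x : ℕ} {w : List ℕ} (h : Alph (x :: w)) : Alph w :=
  fun y hy => h y (List.mem_cons_of_mem _ hy)

lemma q2_rgep_one {w : List ℕ} (hw : Alph w) :
    q2 (rgep 1) w = P 3 2 w := by
  refine q2_congr fun u hu v hv => ?_
  rcases hw u hu with h | h | h <;> rcases hw v hv with h' | h' | h' <;> subst h h' <;> rfl

lemma q2_rgep_two {w : List ℕ} (hw : Alph w) :
    q2 (rgep 2) w = P 1 3 w := by
  refine q2_congr fun u hu v hv => ?_
  rcases hw u hu with h | h | h <;> rcases hw v hv with h' | h' | h' <;> subst h h' <;> rfl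

lemma q2_rgep_three {w : List ℕ} (hw : Alph w) :
    q2 (rgep 3) w = P 2 1 w := by
  refine q2_congr fun u hu v hv => ?_
  rcases hw u hu with h | h | h <;> rcases hw v hv with h' | h' | h' <;> subst h h' <;> rfl

/-- The invariant. -/
def K (w : List ℕ) : ℤ :=
  2 * q3 rgep w + C 3 w * (P 1 2 w - P 2 1 w) + C 1 w * (P 2 3 w - P 3 2 w)
    - C 2 w * (P 1 3 w - P 3 1 w)

lemma K_cons {x : ℕ} {w : List ℕ} (hx : x = 1 ∨ x = 2 ∨ x = 3) (hw : Alph w) :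
    K (x :: w) = K w +
      (if x = 1 then C 2 w * C 3 w else if x = 2 then C 1 w * C 3 w else C 1 w * C 2 w) := by
  rcases hx with h | h | h <;> subst h <;>
    rw [K, K, q3_cons] <;>
    simp only [q2_rgep_one hw, q2_rgep_two hw, q2_rgep_three hw, C_cons, P_cons] <;>
    simp only [ind, if_true, if_false] <;> norm_num
  · linear_combination PC 3 2 (by norm_num) w
  · linear_combination PC 1 3 (by norm_num) w
  · linear_combination PC 1 2 (by norm_num) w



lemma Alph_of_perm {w w' : List ℕ} (h : w.Perm w') (hw : Alph w) : Alph w' :=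
  fun x hx => hw x (h.mem_iff.mpr hx)

lemma K_perm {w w' : List ℕ} (h : w.Perm w') (hw : Alph w) : K w = K w' := by
  induction h with
  | nil => rfl
  | cons x h ih =>
    rename_i l₁ l₂
    have hx : x = 1 ∨ x = 2 ∨ x = 3 := hw x (by simp)
    have hl₁ : Alph l₁ := Alph_cons hw
    have hl₂ : Alph l₂ := Alph_of_perm h hl₁
    rw [K_cons hx hl₁, K_cons hx hl₂, ih hl₁]
    have hC1 : C 1 l₁ = C 1 l₂ := by rw [C_eq_count, C_eq_count, h.count_eq]
    have hC2 : C 2 l₁ = C 2 l₂ := by rw [C_eq_count, C_eq_count, h.count_eq]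
    have hC3 : C 3 l₁ = C 3 l₂ := by rw [C_eq_count, C_eq_count, h.count_eq]
    split_ifs <;> simp only [hC1, hC2, hC3]
  | swap x y l =>
    have hx : x = 1 ∨ x = 2 ∨ x = 3 := hw x (by simp)
    have hy : y = 1 ∨ y = 2 ∨ y = 3 := hw y (by simp)
    have hl : Alph l := fun z hz => hw z (by simp [hz])
    have hxl : Alph (x :: l) := fun z hz => hw z (by
      rcases List.mem_cons.mp hz with h | h <;> simp [h])
    have hyl : Alph (y :: l) := fun z hz => hw z (by
      rcases List.mem_cons.mp hz with h | h <;> simp [h])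
    rw [K_cons hx hyl, K_cons hy hl, K_cons hy hxl, K_cons hx hl]
    rcases hx with rfl | rfl | rfl <;> rcases hy with rfl | rfl | rfl <;>
      simp only [C_cons, ind] <;> norm_num <;> ring
  | trans h₁ h₂ ih₁ ih₂ =>
    rw [ih₁ hw, ih₂ (Alph_of_perm h₁ hw)]

def base (n : ℕ) : List ℕ :=
  List.replicate n 1 ++ List.replicate n 2 ++ List.replicate n 3

lemma count_base (n : ℕ) (a : ℕ) :
    (base n).count a = if a = 1 then n else if a = 2 then n else if a = 3 then n else 0 := by
  rw [base, List.count_append, List.count_append, List.count_replicate,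
    List.count_replicate, List.count_replicate]
  rcases eq_or_ne a 1 with rfl | h1
  · norm_num
  rcases eq_or_ne a 2 with rfl | h2
  · norm_num
  rcases eq_or_ne a 3 with rfl | h3
  · norm_num
  simp [h1, h2, h3, Ne.symm h1, Ne.symm h2, Ne.symm h3]

lemma Alph_base (n : ℕ) : Alph (base n) := by
  intro x hx
  simp only [base, List.mem_append, List.mem_replicate] at hx
  rcases hx with (⟨_, h⟩ | ⟨_, h⟩) | ⟨_, h⟩ <;> simp [h]

lemma K_rep3 (j : ℕ) : K (List.replicate j 3) = 0 := by
  induction j with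
  | zero => rfl
  | succ j ih =>
    rw [List.replicate_succ, K_cons (by norm_num) (fun x hx => by
      rw [List.mem_replicate] at hx; simp [hx.2])]
    have h1 : C 1 (List.replicate j 3) = 0 := by
      rw [C_eq_count, List.count_replicate]; norm_num
    simp [ih, h1]

lemma K_rep23 (n j : ℕ) : K (List.replicate j 2 ++ List.replicate n 3) = 0 := by
  induction j with
  | zero => simpa using K_rep3 n
  | succ j ih =>
    have halph : Alph (List.replicate j 2 ++ List.replicate n 3) := by
      intro x hx
      simp only [List.mem_append, List.mem_replicate] at hx
      rcases hx with ⟨_, h⟩ | ⟨_, h⟩ <;> simp [h]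
    rw [List.replicate_succ, List.cons_append, K_cons (by norm_num) halph]
    have h1 : C 1 (List.replicate j 2 ++ List.replicate n 3) = 0 := by
      rw [C_eq_count, List.count_append, List.count_replicate, List.count_replicate]; norm_num
    simp [ih, h1]

lemma K_base (n : ℕ) : K (base n) = (n : ℤ) ^ 3 := by
  have main : ∀ j, K (List.replicate j 1 ++ (List.replicate n 2 ++ List.replicate n 3))
      = j * (n * n) := by
    intro j
    induction j with
    | zero => simpa using K_rep23 n n
    | succ j ih =>
      have halph : Alph (List.replicate j 1 ++ (List.replicate n 2 ++ List.replicate n 3)) := by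
        intro x hx
        simp only [List.mem_append, List.mem_replicate] at hx
        rcases hx with ⟨_, h⟩ | ⟨_, h⟩ | ⟨_, h⟩ <;> simp [h]
      rw [List.replicate_succ, List.cons_append, K_cons (by norm_num) halph]
      have h2 : C 2 (List.replicate j 1 ++ (List.replicate n 2 ++ List.replicate n 3)) = n := by
        rw [C_eq_count]; simp [List.count_append, List.count_replicate]
      have h3 : C 3 (List.replicate j 1 ++ (List.replicate n 2 ++ List.replicate n 3)) = n := by
        rw [C_eq_count]; simp [List.count_append, List.count_replicate]
      simp only [if_true, eq_self_iff_true]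
      rw [ih, h2, h3]
      push_cast; ring
  have := main n
  rw [base, List.append_assoc]
  rw [this]; ring

/-- The linear statistic T. -/
def T (w : List ℕ) : ℤ :=
  (P 1 2 w - P 2 1 w) - (P 1 3 w - P 3 1 w) + (P 2 3 w - P 3 2 w)

lemma mem_W_iff {a b c : ℕ} {w : List ℕ} : w ∈ W a b c ↔ w.Perm
    (List.replicate a 1 ++ List.replicate b 2 ++ List.replicate c 3) := by
  rw [W, List.mem_toFinset, List.mem_permutations]

theorem partA {n : ℕ} {w : List ℕ} (hw : w ∈ W n n n) :
    2 * (gep w : ℤ) + n * T w = (n : ℤ) ^ 3 := by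
  have hperm : w.Perm (base n) := mem_W_iff.mp hw
  have halph : Alph w := Alph_of_perm hperm.symm (Alph_base n)
  have hK : K w = (n : ℤ) ^ 3 := by rw [K_perm hperm halph, K_base]
  have c1 : C 1 w = n := by
    rw [C_eq_count, hperm.count_eq, count_base]; norm_num
  have c2 : C 2 w = n := by
    rw [C_eq_count, hperm.count_eq, count_base]; norm_num
  have c3 : C 3 w = n := by
    rw [C_eq_count, hperm.count_eq, count_base]; norm_num
  rw [gep_eq_q3]
  rw [K, c1, c2, c3] at hK
  rw [T]; linear_combination hK



lemma C_append (a : ℕ) (u v : List ℕ) : C a (u ++ v) = C a u + C a v := by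
  rw [C_eq_count, C_eq_count, C_eq_count, List.count_append]; push_cast; ring

lemma C_nil (a : ℕ) : C a [] = 0 := rfl
lemma P_nil (a b : ℕ) : P a b [] = 0 := rfl

lemma P_append_singleton (a b x : ℕ) (u : List ℕ) :
    P a b (u ++ [x]) = P a b u + ind b x * C a u := by
  induction u with
  | nil => simp only [List.nil_append, P_cons, C_nil, P_nil]; ring
  | cons y u ih =>
    rw [List.cons_append, P_cons, ih, C_append]
    simp only [P_cons, C_cons, C_nil]
    ring

lemma C_reverse (a : ℕ) (w : List ℕ) : C a w.reverse = C a w := by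
  rw [C_eq_count, C_eq_count, List.count_reverse]

lemma P_reverse (a b : ℕ) (w : List ℕ) : P a b w.reverse = P b a w := by
  induction w with
  | nil => rfl
  | cons x w ih =>
    rw [List.reverse_cons, P_append_singleton, ih, C_reverse, P_cons]
    ring

/-- The linear statistic T again (defined in part A). -/
lemma T_reverse (w : List ℕ) : T w.reverse = - T w := by
  unfold T; rw [P_reverse, P_reverse, P_reverse, P_reverse, P_reverse, P_reverse]; ring

lemma T_cons_one (w : List ℕ) : T (1 :: w) = T w + C 2 w - C 3 w := by
  unfold T; simp only [P_cons, ind]; norm_num; ring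

lemma T_cons_two (w : List ℕ) : T (2 :: w) = T w + C 3 w - C 1 w := by
  unfold T; simp only [P_cons, ind]; norm_num; ring

lemma T_cons_three (w : List ℕ) : T (3 :: w) = T w + C 1 w - C 2 w := by
  unfold T; simp only [P_cons, ind]; norm_num; ring

lemma mem_W' {a b c : ℕ} {w : List ℕ} :
    w ∈ W a b c ↔ w.count 1 = a ∧ w.count 2 = b ∧ w.count 3 = c ∧ Alph w := by
  rw [mem_W_iff]
  constructor
  · intro h
    refine ⟨?_, ?_, ?_, ?_⟩
    · rw [h.count_eq]; simp [List.count_append, List.count_replicate]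
    · rw [h.count_eq]; simp [List.count_append, List.count_replicate]
    · rw [h.count_eq]; simp [List.count_append, List.count_replicate]
    · intro x hx
      have := h.mem_iff.mp hx
      simp only [List.mem_append, List.mem_replicate] at this
      rcases this with (⟨_, h'⟩ | ⟨_, h'⟩) | ⟨_, h'⟩ <;> simp [h']
  · rintro ⟨h1, h2, h3, h4⟩
    rw [List.perm_iff_count]
    intro x
    rcases eq_or_ne x 1 with rfl | e1
    · simp [List.count_append, List.count_replicate, h1]
    rcases eq_or_ne x 2 with rfl | e2
    · simp [List.count_append, List.count_replicate, h2]
    rcases eq_or_ne x 3 with rfl | e3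
    · simp [List.count_append, List.count_replicate, h3]
    have : x ∉ w := fun hx => by rcases h4 x hx with rfl | rfl | rfl <;> simp_all
    rw [List.count_eq_zero_of_not_mem this]
    simp [List.count_append, List.count_replicate, e1, e2, e3, Ne.symm e1, Ne.symm e2, Ne.symm e3]

lemma reverse_mem_W {a b c : ℕ} {w : List ℕ} (h : w ∈ W a b c) : w.reverse ∈ W a b c :=
  mem_W_iff.mpr (w.reverse_perm.trans (mem_W_iff.mp h))

lemma sum_T_zero (a b c : ℕ) : ∑ w ∈ W a b c, T w = 0 := by
  have h : ∑ w ∈ W a b c, T w = ∑ w ∈ W a b c, T w.reverse := by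
    refine Finset.sum_nbij' (fun w => w.reverse) (fun w => w.reverse) ?_ ?_ ?_ ?_ ?_
    · intro w hw; exact reverse_mem_W hw
    · intro w hw; exact reverse_mem_W hw
    · intro w _; exact w.reverse_reverse
    · intro w _; exact w.reverse_reverse
    · intro w _; rw [List.reverse_reverse]
  simp only [T_reverse] at h
  rw [Finset.sum_neg_distrib] at h
  omega



lemma head_cases {a b c : ℕ} {w : List ℕ} (hw : w ∈ W a b c) (h : a + b + c ≠ 0) :
    w.head? = some 1 ∨ w.head? = some 2 ∨ w.head? = some 3 := by
  obtain ⟨h1, h2, h3, h4⟩ := mem_W'.mp hw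
  cases w with
  | nil => simp at h1 h2 h3; omega
  | cons x t =>
    rcases h4 x (by simp) with rfl | rfl | rfl <;> simp

lemma sumW_split {M : Type*} [AddCommMonoid M] (f : List ℕ → M) (a b c : ℕ) (h : a + b + c ≠ 0) :
    ∑ w ∈ W a b c, f w =
      (∑ w ∈ (W a b c).filter (fun w => w.head? = some 1), f w) +
      (∑ w ∈ (W a b c).filter (fun w => w.head? = some 2), f w) +
      (∑ w ∈ (W a b c).filter (fun w => w.head? = some 3), f w) := by
  classical
  rw [← Finset.sum_filter_add_sum_filter_not (W a b c) (fun w => w.head? = some 1) f]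
  rw [← Finset.sum_filter_add_sum_filter_not
    ((W a b c).filter (fun w => ¬ w.head? = some 1)) (fun w => w.head? = some 2) f]
  rw [Finset.filter_filter, Finset.filter_filter]
  have e2 : (W a b c).filter (fun w => ¬w.head? = some 1 ∧ w.head? = some 2)
      = (W a b c).filter (fun w => w.head? = some 2) := by
    ext w
    simp only [Finset.mem_filter]
    constructor
    · rintro ⟨hm, _, h2⟩; exact ⟨hm, h2⟩
    · rintro ⟨hm, h2⟩; exact ⟨hm, by rw [h2]; simp, h2⟩
  have e3 : (W a b c).filter (fun w => ¬w.head? = some 1 ∧ ¬w.head? = some 2)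
      = (W a b c).filter (fun w => w.head? = some 3) := by
    ext w
    simp only [Finset.mem_filter]
    constructor
    · rintro ⟨hm, hn1, hn2⟩
      refine ⟨hm, ?_⟩
      rcases head_cases hm h with h1 | h1 | h1
      · exact absurd h1 hn1
      · exact absurd h1 hn2
      · exact h1
    · rintro ⟨hm, h3⟩
      exact ⟨hm, by rw [h3]; simp, by rw [h3]; simp⟩
  rw [e2, e3, add_assoc]

lemma filter_head1_empty (b c : ℕ) :
    (W 0 b c).filter (fun w => w.head? = some 1) = ∅ := by
  rw [Finset.filter_eq_empty_iff]
  intro w hw hhead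
  obtain ⟨h1, _, _, _⟩ := mem_W'.mp hw
  cases w with
  | nil => simp at hhead
  | cons x t => simp at hhead; subst hhead; simp [List.count_cons] at h1

lemma filter_head2_empty (a c : ℕ) :
    (W a 0 c).filter (fun w => w.head? = some 2) = ∅ := by
  rw [Finset.filter_eq_empty_iff]
  intro w hw hhead
  obtain ⟨_, h2, _, _⟩ := mem_W'.mp hw
  cases w with
  | nil => simp at hhead
  | cons x t => simp at hhead; subst hhead; simp [List.count_cons] at h2

lemma filter_head3_empty (a b : ℕ) :
    (W a b 0).filter (fun w => w.head? = some 3) = ∅ := by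
  rw [Finset.filter_eq_empty_iff]
  intro w hw hhead
  obtain ⟨_, _, h3, _⟩ := mem_W'.mp hw
  cases w with
  | nil => simp at hhead
  | cons x t => simp at hhead; subst hhead; simp [List.count_cons] at h3

lemma cons_mem_W_one {a b c : ℕ} {u : List ℕ} :
    (1 :: u) ∈ W (a + 1) b c ↔ u ∈ W a b c := by
  rw [mem_W', mem_W']
  simp only [List.count_cons]
  norm_num
  intro _ _ _
  constructor
  · exact Alph_cons
  · intro h4 x hx
    rcases List.mem_cons.mp hx with rfl | hx
    · left; rfl
    · exact h4 x hx

lemma cons_mem_W_two {a b c : ℕ} {u : List ℕ} :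
    (2 :: u) ∈ W a (b + 1) c ↔ u ∈ W a b c := by
  rw [mem_W', mem_W']
  simp only [List.count_cons]
  norm_num
  intro _ _ _
  constructor
  · exact Alph_cons
  · intro h4 x hx
    rcases List.mem_cons.mp hx with rfl | hx
    · right; left; rfl
    · exact h4 x hx

lemma cons_mem_W_three {a b c : ℕ} {u : List ℕ} :
    (3 :: u) ∈ W a b (c + 1) ↔ u ∈ W a b c := by
  rw [mem_W', mem_W']
  simp only [List.count_cons]
  norm_num
  intro _ _ _
  constructor
  · exact Alph_cons
  · intro h4 x hx
    rcases List.mem_cons.mp hx with rfl | hx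
    · right; right; rfl
    · exact h4 x hx

lemma sum_filter_head1 {M : Type*} [AddCommMonoid M] (f : List ℕ → M) (a b c : ℕ) :
    ∑ w ∈ (W (a + 1) b c).filter (fun w => w.head? = some 1), f w =
      ∑ u ∈ W a b c, f (1 :: u) := by
  refine Finset.sum_nbij' (fun w => w.tail) (fun u => 1 :: u) ?_ ?_ ?_ ?_ ?_
  · intro w hw
    rw [Finset.mem_filter] at hw
    obtain ⟨hmem, hhead⟩ := hw
    cases w with
    | nil => simp at hhead
    | cons x t =>
      simp at hhead; subst hhead
      exact cons_mem_W_one.mp hmem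
  · intro u hu
    rw [Finset.mem_filter]
    exact ⟨cons_mem_W_one.mpr hu, rfl⟩
  · intro w hw
    rw [Finset.mem_filter] at hw
    cases w with
    | nil => simp at hw
    | cons x t => obtain ⟨_, hhead⟩ := hw; simp at hhead; subst hhead; rfl
  · intro u _; rfl
  · intro w hw
    rw [Finset.mem_filter] at hw
    cases w with
    | nil => simp at hw
    | cons x t => obtain ⟨_, hhead⟩ := hw; simp at hhead; subst hhead; rfl

lemma sum_filter_head2 {M : Type*} [AddCommMonoid M] (f : List ℕ → M) (a b c : ℕ) :
    ∑ w ∈ (W a (b + 1) c).filter (fun w => w.head? = some 2), f w =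
      ∑ u ∈ W a b c, f (2 :: u) := by
  refine Finset.sum_nbij' (fun w => w.tail) (fun u => 2 :: u) ?_ ?_ ?_ ?_ ?_
  · intro w hw
    rw [Finset.mem_filter] at hw
    obtain ⟨hmem, hhead⟩ := hw
    cases w with
    | nil => simp at hhead
    | cons x t =>
      simp at hhead; subst hhead
      exact cons_mem_W_two.mp hmem
  · intro u hu
    rw [Finset.mem_filter]
    exact ⟨cons_mem_W_two.mpr hu, rfl⟩
  · intro w hw
    rw [Finset.mem_filter] at hw
    cases w with
    | nil => simp at hw
    | cons x t => obtain ⟨_, hhead⟩ := hw; simp at hhead; subst hhead; rfl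
  · intro u _; rfl
  · intro w hw
    rw [Finset.mem_filter] at hw
    cases w with
    | nil => simp at hw
    | cons x t => obtain ⟨_, hhead⟩ := hw; simp at hhead; subst hhead; rfl

lemma sum_filter_head3 {M : Type*} [AddCommMonoid M] (f : List ℕ → M) (a b c : ℕ) :
    ∑ w ∈ (W a b (c + 1)).filter (fun w => w.head? = some 3), f w =
      ∑ u ∈ W a b c, f (3 :: u) := by
  refine Finset.sum_nbij' (fun w => w.tail) (fun u => 3 :: u) ?_ ?_ ?_ ?_ ?_
  · intro w hw
    rw [Finset.mem_filter] at hw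
    obtain ⟨hmem, hhead⟩ := hw
    cases w with
    | nil => simp at hhead
    | cons x t =>
      simp at hhead; subst hhead
      exact cons_mem_W_three.mp hmem
  · intro u hu
    rw [Finset.mem_filter]
    exact ⟨cons_mem_W_three.mpr hu, rfl⟩
  · intro w hw
    rw [Finset.mem_filter] at hw
    cases w with
    | nil => simp at hw
    | cons x t => obtain ⟨_, hhead⟩ := hw; simp at hhead; subst hhead; rfl
  · intro u _; rfl
  · intro w hw
    rw [Finset.mem_filter] at hw
    cases w with
    | nil => simp at hw
    | cons x t => obtain ⟨_, hhead⟩ := hw; simp at hhead; subst hhead; rfl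

/-- The multinomial coefficient as a rational number. -/
def MQ (a b c : ℕ) : ℚ :=
  ((a + b + c).factorial : ℚ) / ((a.factorial : ℚ) * (b.factorial : ℚ) * (c.factorial : ℚ))

lemma MQ_pos (a b c : ℕ) : 0 < MQ a b c := by
  unfold MQ
  have h1 : (0:ℚ) < (a + b + c).factorial := by exact_mod_cast (a+b+c).factorial_pos
  have h2 : (0:ℚ) < a.factorial := by exact_mod_cast a.factorial_pos
  have h3 : (0:ℚ) < b.factorial := by exact_mod_cast b.factorial_pos
  have h4 : (0:ℚ) < c.factorial := by exact_mod_cast c.factorial_pos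
  positivity

lemma MQ_succ1 (a b c : ℕ) : ((a:ℚ) + b + c + 1) * MQ a b c = ((a:ℚ) + 1) * MQ (a + 1) b c := by
  unfold MQ
  have h : (a + 1) + b + c = (a + b + c) + 1 := by omega
  rw [h, Nat.factorial_succ, Nat.factorial_succ]
  have h2 : ((a.factorial : ℚ)) ≠ 0 := by exact_mod_cast a.factorial_ne_zero
  have h3 : ((b.factorial : ℚ)) ≠ 0 := by exact_mod_cast b.factorial_ne_zero
  have h4 : ((c.factorial : ℚ)) ≠ 0 := by exact_mod_cast c.factorial_ne_zero
  push_cast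
  field_simp

lemma MQ_succ2 (a b c : ℕ) : ((a:ℚ) + b + c + 1) * MQ a b c = ((b:ℚ) + 1) * MQ a (b + 1) c := by
  unfold MQ
  have h : a + (b + 1) + c = (a + b + c) + 1 := by omega
  rw [h, Nat.factorial_succ, Nat.factorial_succ]
  have h2 : ((a.factorial : ℚ)) ≠ 0 := by exact_mod_cast a.factorial_ne_zero
  have h3 : ((b.factorial : ℚ)) ≠ 0 := by exact_mod_cast b.factorial_ne_zero
  have h4 : ((c.factorial : ℚ)) ≠ 0 := by exact_mod_cast c.factorial_ne_zero
  push_cast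
  field_simp

lemma MQ_succ3 (a b c : ℕ) : ((a:ℚ) + b + c + 1) * MQ a b c = ((c:ℚ) + 1) * MQ a b (c + 1) := by
  unfold MQ
  have h : a + b + (c + 1) = (a + b + c) + 1 := by omega
  rw [h, Nat.factorial_succ, Nat.factorial_succ]
  have h2 : ((a.factorial : ℚ)) ≠ 0 := by exact_mod_cast a.factorial_ne_zero
  have h3 : ((b.factorial : ℚ)) ≠ 0 := by exact_mod_cast b.factorial_ne_zero
  have h4 : ((c.factorial : ℚ)) ≠ 0 := by exact_mod_cast c.factorial_ne_zero
  push_cast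
  field_simp

lemma W_zero : W 0 0 0 = {[]} := by
  ext w
  rw [mem_W']
  simp only [Finset.mem_singleton]
  constructor
  · rintro ⟨h1, h2, h3, h4⟩
    cases w with
    | nil => rfl
    | cons x t =>
      exfalso
      rcases h4 x (by simp) with rfl | rfl | rfl <;> simp [List.count_cons] at h1 h2 h3
  · rintro rfl
    refine ⟨rfl, rfl, rfl, ?_⟩
    intro x hx
    simp at hx

lemma card_W : ∀ (N a b c : ℕ), a + b + c = N → ((W a b c).card : ℚ) = MQ a b c := by
  intro N
  induction N using Nat.strong_induction_on with
  | _ N IH =>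
    intro a b c hN
    rcases Nat.eq_zero_or_pos N with rfl | hpos
    · obtain ⟨rfl, rfl, rfl⟩ : a = 0 ∧ b = 0 ∧ c = 0 := by omega
      rw [W_zero]
      simp [MQ]
    have hsum : ((W a b c).card : ℚ) = ∑ w ∈ W a b c, (1:ℚ) := by
      rw [Finset.sum_const, nsmul_eq_mul, mul_one]
    have h0 : a + b + c ≠ 0 := by omega
    rw [hsum, sumW_split _ a b c h0]
    have h1 : ((a:ℚ) + b + c) * ∑ w ∈ (W a b c).filter (fun w => w.head? = some 1), (1:ℚ)
        = (a:ℚ) * MQ a b c := by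
      rcases a with _ | a'
      · rw [filter_head1_empty]; simp
      · rw [sum_filter_head1]
        have hc : ((W a' b c).card : ℚ) = MQ a' b c := IH (a' + b + c) (by omega) a' b c rfl
        rw [show ∑ u ∈ W a' b c, (1:ℚ) = ((W a' b c).card : ℚ) by
          rw [Finset.sum_const, nsmul_eq_mul, mul_one], hc]
        have := MQ_succ1 a' b c
        push_cast
        linear_combination this
    have h2 : ((a:ℚ) + b + c) * ∑ w ∈ (W a b c).filter (fun w => w.head? = some 2), (1:ℚ)
        = (b:ℚ) * MQ a b c := by
      rcases b with _ | b'
      · rw [filter_head2_empty]; simp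
      · rw [sum_filter_head2]
        have hc : ((W a b' c).card : ℚ) = MQ a b' c := IH (a + b' + c) (by omega) a b' c rfl
        rw [show ∑ u ∈ W a b' c, (1:ℚ) = ((W a b' c).card : ℚ) by
          rw [Finset.sum_const, nsmul_eq_mul, mul_one], hc]
        have := MQ_succ2 a b' c
        push_cast
        linear_combination this
    have h3 : ((a:ℚ) + b + c) * ∑ w ∈ (W a b c).filter (fun w => w.head? = some 3), (1:ℚ)
        = (c:ℚ) * MQ a b c := by
      rcases c with _ | c'
      · rw [filter_head3_empty]; simp
      · rw [sum_filter_head3]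
        have hc : ((W a b c').card : ℚ) = MQ a b c' := IH (a + b + c') (by omega) a b c' rfl
        rw [show ∑ u ∈ W a b c', (1:ℚ) = ((W a b c').card : ℚ) by
          rw [Finset.sum_const, nsmul_eq_mul, mul_one], hc]
        have := MQ_succ3 a b c'
        push_cast
        linear_combination this
    have hN0 : ((a:ℚ) + b + c) ≠ 0 := by
      have : (0:ℚ) < (a:ℚ) + b + c := by
        have : 0 < a + b + c := by omega
        exact_mod_cast this
      linarith
    apply mul_left_cancel₀ hN0
    rw [mul_add, mul_add, h1, h2, h3]
    ring



/-- The variance polynomial. -/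
def Vq (a b c : ℕ) : ℚ :=
  (((a:ℚ) * b + (b:ℚ) * c + (a:ℚ) * c) * ((a:ℚ) + b + c + 1) - 9 * a * b * c) / 3

/-- Vq at (x-1, y, z), as a polynomial in the rationals x, y, z. -/
def VqP (x y z : ℚ) : ℚ :=
  (((x - 1) * y + y * z + (x - 1) * z) * (x + y + z) - 9 * (x - 1) * y * z) / 3

lemma sum_one_eq_card (s : Finset (List ℕ)) : ∑ _w ∈ s, (1:ℚ) = (s.card : ℚ) := by
  rw [Finset.sum_const, nsmul_eq_mul, mul_one]

lemma sum_T_ql (a b c : ℕ) : ∑ w ∈ W a b c, ((T w : ℚ)) = 0 := by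
  have := sum_T_zero a b c
  have h : ((∑ w ∈ W a b c, T w : ℤ) : ℚ) = 0 := by rw [this]; rfl
  rw [← h]
  push_cast
  rfl

lemma sum_sq_shift (s : Finset (List ℕ)) (d : ℚ) :
    ∑ u ∈ s, ((T u : ℚ) + d) ^ 2
      = (∑ u ∈ s, ((T u : ℚ)) ^ 2) + 2 * d * (∑ u ∈ s, ((T u : ℚ)))
        + d ^ 2 * (∑ _u ∈ s, (1:ℚ)) := by
  have hpt : ∀ u ∈ s, ((T u : ℚ) + d) ^ 2
      = ((T u : ℚ)) ^ 2 + (2 * d * ((T u : ℚ)) + d ^ 2 * 1) := fun u _ => by ring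
  rw [Finset.sum_congr rfl hpt, Finset.sum_add_distrib, Finset.sum_add_distrib,
    ← Finset.mul_sum, ← Finset.mul_sum]
  ring

lemma sum_T_sq : ∀ (N a b c : ℕ), a + b + c = N →
    ∑ w ∈ W a b c, ((T w : ℚ)) ^ 2 = Vq a b c * MQ a b c := by
  intro N
  induction N using Nat.strong_induction_on with
  | _ N IH =>
    intro a b c hN
    rcases Nat.eq_zero_or_pos N with rfl | hpos
    · obtain ⟨rfl, rfl, rfl⟩ : a = 0 ∧ b = 0 ∧ c = 0 := by omega
      rw [W_zero]
      simp [Vq, show T [] = 0 from rfl]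
    have h0 : a + b + c ≠ 0 := by omega
    rw [sumW_split _ a b c h0]
    have h1 : ((a:ℚ) + b + c) *
        ∑ w ∈ (W a b c).filter (fun w => w.head? = some 1), ((T w : ℚ)) ^ 2
        = (a:ℚ) * (VqP a b c + ((b:ℚ) - c) ^ 2) * MQ a b c := by
      rcases a with _ | a'
      · rw [filter_head1_empty]; simp
      · rw [sum_filter_head1]
        have hT : ∀ u ∈ W a' b c, ((T (1 :: u) : ℚ)) ^ 2
            = ((T u : ℚ) + ((b:ℚ) - c)) ^ 2 := by
          intro u hu
          obtain ⟨h1, h2, h3, _⟩ := mem_W'.mp hu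
          rw [T_cons_one, C_eq_count, C_eq_count, h2, h3]
          push_cast
          ring
        rw [Finset.sum_congr rfl hT]
        have hexp : ∑ u ∈ W a' b c, ((T u : ℚ) + ((b:ℚ) - c)) ^ 2
            = (∑ u ∈ W a' b c, ((T u : ℚ)) ^ 2)
              + 2 * ((b:ℚ) - c) * (∑ u ∈ W a' b c, ((T u : ℚ)))
              + ((b:ℚ) - c) ^ 2 * (∑ _u ∈ W a' b c, (1:ℚ)) := by
          exact sum_sq_shift _ _
        rw [hexp, sum_T_ql, sum_one_eq_card,
          IH (a' + b + c) (by omega) a' b c rfl,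
          card_W (a' + b + c) a' b c rfl]
        have hmq := MQ_succ1 a' b c
        have hvq : VqP ((a':ℚ) + 1) b c = Vq a' b c := by
          unfold VqP Vq; push_cast; ring
        push_cast
        rw [hvq]
        linear_combination (Vq a' b c + ((b:ℚ) - c) ^ 2) * hmq
    have h2 : ((a:ℚ) + b + c) *
        ∑ w ∈ (W a b c).filter (fun w => w.head? = some 2), ((T w : ℚ)) ^ 2
        = (b:ℚ) * (VqP b a c + ((c:ℚ) - a) ^ 2) * MQ a b c := by
      rcases b with _ | b'
      · rw [filter_head2_empty]; simp
      · rw [sum_filter_head2]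
        have hT : ∀ u ∈ W a b' c, ((T (2 :: u) : ℚ)) ^ 2
            = ((T u : ℚ) + ((c:ℚ) - a)) ^ 2 := by
          intro u hu
          obtain ⟨h1, h2, h3, _⟩ := mem_W'.mp hu
          rw [T_cons_two, C_eq_count, C_eq_count, h1, h3]
          push_cast
          ring
        rw [Finset.sum_congr rfl hT]
        have hexp : ∑ u ∈ W a b' c, ((T u : ℚ) + ((c:ℚ) - a)) ^ 2
            = (∑ u ∈ W a b' c, ((T u : ℚ)) ^ 2)
              + 2 * ((c:ℚ) - a) * (∑ u ∈ W a b' c, ((T u : ℚ)))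
              + ((c:ℚ) - a) ^ 2 * (∑ _u ∈ W a b' c, (1:ℚ)) := by
          exact sum_sq_shift _ _
        rw [hexp, sum_T_ql, sum_one_eq_card,
          IH (a + b' + c) (by omega) a b' c rfl,
          card_W (a + b' + c) a b' c rfl]
        have hmq := MQ_succ2 a b' c
        have hvq : VqP ((b':ℚ) + 1) a c = Vq a b' c := by
          unfold VqP Vq; push_cast; ring
        push_cast
        rw [hvq]
        linear_combination (Vq a b' c + ((c:ℚ) - a) ^ 2) * hmq
    have h3 : ((a:ℚ) + b + c) *
        ∑ w ∈ (W a b c).filter (fun w => w.head? = some 3), ((T w : ℚ)) ^ 2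
        = (c:ℚ) * (VqP c a b + ((a:ℚ) - b) ^ 2) * MQ a b c := by
      rcases c with _ | c'
      · rw [filter_head3_empty]; simp
      · rw [sum_filter_head3]
        have hT : ∀ u ∈ W a b c', ((T (3 :: u) : ℚ)) ^ 2
            = ((T u : ℚ) + ((a:ℚ) - b)) ^ 2 := by
          intro u hu
          obtain ⟨h1, h2, h3, _⟩ := mem_W'.mp hu
          rw [T_cons_three, C_eq_count, C_eq_count, h1, h2]
          push_cast
          ring
        rw [Finset.sum_congr rfl hT]
        have hexp : ∑ u ∈ W a b c', ((T u : ℚ) + ((a:ℚ) - b)) ^ 2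
            = (∑ u ∈ W a b c', ((T u : ℚ)) ^ 2)
              + 2 * ((a:ℚ) - b) * (∑ u ∈ W a b c', ((T u : ℚ)))
              + ((a:ℚ) - b) ^ 2 * (∑ _u ∈ W a b c', (1:ℚ)) := by
          exact sum_sq_shift _ _
        rw [hexp, sum_T_ql, sum_one_eq_card,
          IH (a + b + c') (by omega) a b c' rfl,
          card_W (a + b + c') a b c' rfl]
        have hmq := MQ_succ3 a b c'
        have hvq : VqP ((c':ℚ) + 1) a b = Vq a b c' := by
          unfold VqP Vq; push_cast; ring
        push_cast
        rw [hvq]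
        linear_combination (Vq a b c' + ((a:ℚ) - b) ^ 2) * hmq
    have hN0 : ((a:ℚ) + b + c) ≠ 0 := by
      have h' : (0:ℚ) < (a:ℚ) + b + c := by
        have : 0 < a + b + c := by omega
        exact_mod_cast this
      linarith
    apply mul_left_cancel₀ hN0
    rw [mul_add, mul_add, h1, h2, h3]
    unfold Vq VqP
    ring


end GepAux

theorem gep_words_variance (n : ℕ) (hn : 1 ≤ n) :
    (∑ w ∈ W n n n, ((gep w : ℚ) - (n : ℚ) ^ 3 / 2) ^ 2) / ((W n n n).card : ℚ) =
      (n : ℚ) ^ 4 / 4 := by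
  classical
  have key : ∀ w ∈ W n n n, ((gep w : ℚ) - (n : ℚ) ^ 3 / 2) ^ 2
      = (n : ℚ) ^ 2 / 4 * ((GepAux.T w : ℚ)) ^ 2 := by
    intro w hw
    have h := GepAux.partA hw
    have hq : 2 * ((gep w : ℚ)) + (n : ℚ) * ((GepAux.T w : ℚ)) = (n : ℚ) ^ 3 := by
      exact_mod_cast h
    have h2 : (gep w : ℚ) - (n : ℚ) ^ 3 / 2 = -(n : ℚ) * ((GepAux.T w : ℚ)) / 2 := by
      linarith
    rw [h2]; ring
  rw [Finset.sum_congr rfl key, ← Finset.mul_sum,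
    GepAux.sum_T_sq (n + n + n) n n n rfl, GepAux.card_W (n + n + n) n n n rfl]
  have hV : GepAux.Vq n n n = (n : ℚ) ^ 2 := by unfold GepAux.Vq; ring
  have hM : GepAux.MQ n n n ≠ 0 := ne_of_gt (GepAux.MQ_pos n n n)
  rw [hV]
  field_simp
end

section
/- For every n ≥ 1, the fourth central moment of the Gepner statistic over W(n,n,n) equals n⁷(21n − 16)/80; that is, (1/|W(n,n,n)|) Σ_{w ∈ W(n,n,n)} (gep(w) − n³/2)⁴ = n⁷(21n − 16)/80 (as an identity in ℚ). -/
/-!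
Write `inv_xy w` for the number of pairs of positions of `w` carrying `x` before `y`, and `c_x`
for the number of letters `x`. Splitting `gep` according to the first letter gives
`2 gep = c₁c₂c₃ + c₃ (inv₂₁ - inv₁₂) + c₁ (inv₃₂ - inv₂₃) + c₂ (inv₁₃ - inv₃₁)`, so on `W n n n`
we have `gep - n³/2 = n Z` with `Z = ((inv₂₁ - inv₁₂) + (inv₃₂ - inv₂₃) + (inv₁₃ - inv₃₁)) / 2`.
Prepending a letter to a word shifts `Z` by a constant depending only on that letter and the
letter counts of the word, so the power sums of `Z` over `W a b c` satisfy a linear recursion in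
`(a, b, c)`. Explicit polynomials solving it are checked by induction on `a + b + c`, and the
fourth one, evaluated at `a = b = c = n`, gives the result.
-/

open Finset

section PatternCounts

variable {α : Type*}

def pairCount (Q : α → α → Prop) [DecidableRel Q] : List α → ℕ
  | [] => 0
  | y :: w => w.countP (fun z => Q y z) + pairCount Q w

def tripleCount (R : α → α → α → Prop) [∀ x, DecidableRel (R x)] : List α → ℕ
  | [] => 0
  | x :: w => pairCount (R x) w + tripleCount R w

theorem countP_eq_sum_fin (p : α → Bool) (w : List α) :
    w.countP p = ∑ j : Fin w.length, if p (w.get j) then 1 else 0 := by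
  induction w with
  | nil => rfl
  | cons x w ih =>
    simp only [List.countP_cons, ih, List.length_cons, Fin.sum_univ_succ, List.get_eq_getElem,
      Fin.val_succ, Fin.val_zero, List.getElem_cons_zero, List.getElem_cons_succ]
    exact add_comm _ _

theorem sum_pairs_eq_pairCount (Q : α → α → Prop) [DecidableRel Q] (w : List α) :
    (∑ t : Fin w.length × Fin w.length,
      if t.1 < t.2 ∧ Q (w.get t.1) (w.get t.2) then 1 else 0) = pairCount Q w := by
  induction w with
  | nil => rfl
  | cons x w ih =>
    rw [pairCount, countP_eq_sum_fin, ← ih]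
    simp only [Fintype.sum_prod_type, List.length_cons, Fin.sum_univ_succ, List.get_eq_getElem,
      Fin.val_succ, Fin.val_zero, List.getElem_cons_zero, List.getElem_cons_succ,
      Fin.not_lt_zero, Fin.succ_pos, Fin.succ_lt_succ_iff, false_and, true_and, if_false,
      zero_add, decide_eq_true_eq]

theorem sum_triples_eq_tripleCount (R : α → α → α → Prop) [∀ x, DecidableRel (R x)]
    (w : List α) :
    (∑ t : Fin w.length × Fin w.length × Fin w.length,
      if t.1 < t.2.1 ∧ t.2.1 < t.2.2 ∧ R (w.get t.1) (w.get t.2.1) (w.get t.2.2)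
      then 1 else 0) = tripleCount R w := by
  induction w with
  | nil => rfl
  | cons x w ih =>
    rw [tripleCount, ← ih, ← sum_pairs_eq_pairCount]
    simp only [Fintype.sum_prod_type, List.length_cons, Fin.sum_univ_succ, List.get_eq_getElem,
      Fin.val_succ, Fin.val_zero, List.getElem_cons_zero, List.getElem_cons_succ,
      Fin.not_lt_zero, Fin.succ_pos, Fin.succ_lt_succ_iff, false_and, true_and, and_false,
      if_false, sum_const_zero, zero_add]

theorem pairCount_congr {Q Q' : α → α → Prop} [DecidableRel Q] [DecidableRel Q'] {w : List α}
    (h : ∀ y ∈ w, ∀ z ∈ w, Q y z ↔ Q' y z) : pairCount Q w = pairCount Q' w := by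
  induction w with
  | nil => rfl
  | cons y w ih =>
    rw [pairCount, pairCount, ih fun a ha b hb => h a (.tail _ ha) b (.tail _ hb)]
    congr 1
    exact List.countP_congr fun z hz => by simpa using h y List.mem_cons_self z (.tail _ hz)

end PatternCounts

section Gep

variable {α : Type*}

def gepPattern [LinearOrder α] (x y z : α) : Prop :=
  (x < z ∧ z < y) ∨ (y < x ∧ x < z) ∨ (z < y ∧ y < x)

instance [LinearOrder α] (x : α) : DecidableRel (gepPattern x) :=
  fun _ _ => by unfold gepPattern; infer_instance

theorem gep_cons [LinearOrder α] (x : α) (w : List α) :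
    gep (x :: w) = pairCount (gepPattern x) w + gep w := by
  have h (v : List α) : gep v = tripleCount gepPattern v := by
    rw [gep, card_filter, ← sum_triples_eq_tripleCount]
    rfl
  rw [h, h, tripleCount]

def countPairs [DecidableEq α] (u v : α) (w : List α) : ℕ :=
  pairCount (fun y z => y = u ∧ z = v) w

variable [DecidableEq α]

@[simp]
theorem countPairs_nil (u v : α) : countPairs u v [] = 0 := rfl

@[simp]
theorem countPairs_cons (u v x : α) (w : List α) :
    countPairs u v (x :: w) = (if x = u then w.count v else 0) + countPairs u v w := by
  by_cases h : x = u <;> simp [countPairs, pairCount, h]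
  rfl

theorem countPairs_add_countPairs_swap {u v : α} (huv : u ≠ v) (w : List α) :
    countPairs u v w + countPairs v u w = w.count u * w.count v := by
  induction w with
  | nil => rfl
  | cons x w ih =>
    simp only [countPairs_cons, List.count_cons, beq_iff_eq]
    by_cases hu : x = u
    · subst hu; simp [huv]; linarith
    by_cases hv : x = v
    · subst hv; simp [hu]; linarith
    simp [hu, hv, ih]

end Gep

theorem pairCount_gepPattern_eq_countPairs {x u v : ℕ} {w : List ℕ} (hw : w ⊆ [1, 2, 3])
    (h : ∀ y ∈ [1, 2, 3], ∀ z ∈ [1, 2, 3], gepPattern x y z ↔ y = u ∧ z = v) :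
    pairCount (gepPattern x) w = countPairs u v w :=
  pairCount_congr fun y hy z hz => h y (hw hy) z (hw hz)

theorem two_mul_gep_eq {w : List ℕ} (hw : w ⊆ [1, 2, 3]) :
    2 * (gep w : ℤ) = w.count 1 * w.count 2 * w.count 3
      + w.count 3 * ((countPairs 2 1 w : ℤ) - countPairs 1 2 w)
      + w.count 1 * ((countPairs 3 2 w : ℤ) - countPairs 2 3 w)
      + w.count 2 * ((countPairs 1 3 w : ℤ) - countPairs 3 1 w) := by
  induction w with
  | nil => rfl
  | cons x w ih =>
    obtain ⟨hx, hw'⟩ := List.cons_subset.mp hw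
    have swap (u v : ℕ) (huv : u ≠ v) :
        (countPairs u v w : ℤ) + countPairs v u w = w.count u * w.count v := by
      exact_mod_cast countPairs_add_countPairs_swap huv w
    rw [gep_cons]
    simp only [List.mem_cons, List.not_mem_nil, or_false] at hx
    rcases hx with rfl | rfl | rfl
    · rw [pairCount_gepPattern_eq_countPairs (x := 1) (u := 3) (v := 2) hw' (by decide)]
      simp only [Nat.cast_add, List.count_cons_self, Nat.cast_one, ne_eq, OfNat.one_ne_ofNat,
        not_false_eq_true, List.count_cons_of_ne, countPairs_cons, ↓reduceIte, zero_add]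
      linear_combination ih hw' + swap 3 2 (by decide)
    · rw [pairCount_gepPattern_eq_countPairs (x := 2) (u := 1) (v := 3) hw' (by decide)]
      simp only [Nat.cast_add, ne_eq, OfNat.ofNat_ne_one, not_false_eq_true,
        List.count_cons_of_ne, List.count_cons_self, Nat.cast_one, Nat.reduceEqDiff,
        countPairs_cons, ↓reduceIte, zero_add]
      linear_combination ih hw' + swap 1 3 (by decide)
    · rw [pairCount_gepPattern_eq_countPairs (x := 3) (u := 2) (v := 1) hw' (by decide)]
      simp only [Nat.cast_add, ne_eq, OfNat.ofNat_ne_one, not_false_eq_true,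
        List.count_cons_of_ne, Nat.succ_ne_self, List.count_cons_self, Nat.cast_one,
        countPairs_cons, ↓reduceIte, zero_add]
      linear_combination ih hw' + swap 2 1 (by decide)

theorem List.sum_permutations_toFinset_eq_sum_cons {α M : Type*} [DecidableEq α]
    [AddCommMonoid M] {l : List α} (hl : l ≠ []) (F : List α → M) :
    ∑ w ∈ l.permutations.toFinset, F w =
      ∑ x ∈ l.toFinset, ∑ t ∈ (l.erase x).permutations.toFinset, F (x :: t) := by
  rw [sum_sigma']
  symm
  refine sum_nbij' (fun p => p.1 :: p.2) (fun w => ⟨w.headD (l.head hl), w.tail⟩)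
    ?_ ?_ ?_ ?_ fun _ _ => rfl
  · rintro ⟨x, t⟩ h
    simp_all [List.cons_perm_iff_perm_erase]
  · rintro (_ | ⟨y, t⟩) h
    · simp_all
    · simp_all [List.cons_perm_iff_perm_erase]
  · rintro ⟨x, t⟩ _
    rfl
  · rintro (_ | ⟨y, t⟩) h
    · simp_all
    · rfl

def letters (a b c : ℕ) : List ℕ :=
  List.replicate a 1 ++ List.replicate b 2 ++ List.replicate c 3

theorem sum_W_eq_sum_cons {M : Type*} [AddCommMonoid M] (F : List ℕ → M) {a b c : ℕ}
    (h : a + b + c ≠ 0) :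
    ∑ w ∈ W a b c, F w =
      (if a = 0 then 0 else ∑ t ∈ W (a - 1) b c, F (1 :: t)) +
      (if b = 0 then 0 else ∑ t ∈ W a (b - 1) c, F (2 :: t)) +
      (if c = 0 then 0 else ∑ t ∈ W a b (c - 1), F (3 :: t)) := by
  have hl : letters a b c ≠ [] := by simpa [letters, ← List.length_eq_zero_iff] using h
  have hsupp :
      (letters a b c).toFinset = ({1, 2, 3} : Finset ℕ).filter (· ∈ letters a b c) := by
    ext x
    simp only [List.mem_toFinset, mem_filter]
    simp [letters, List.mem_replicate]
    omega
  change ∑ w ∈ (letters a b c).permutations.toFinset, F w = _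
  rw [List.sum_permutations_toFinset_eq_sum_cons hl, hsupp, sum_filter, sum_insert (by decide),
    sum_insert (by decide), sum_singleton, ← add_assoc]
  refine congrArg₂ (· + ·) (congrArg₂ (· + ·) ?_ ?_) ?_
  · cases a <;> simp [letters, W, List.replicate_succ]
  · cases b <;> simp [letters, W, List.replicate_succ, List.erase_append]
  · cases c <;> simp [letters, W, List.replicate_succ, List.erase_append]

theorem perm_letters_of_mem_W {w : List ℕ} {a b c : ℕ} (hw : w ∈ W a b c) :
    w.Perm (letters a b c) :=
  List.mem_permutations.mp (List.mem_toFinset.mp hw)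

theorem count_of_mem_W {w : List ℕ} {a b c : ℕ} (hw : w ∈ W a b c) :
    w.count 1 = a ∧ w.count 2 = b ∧ w.count 3 = c := by
  simp [(perm_letters_of_mem_W hw).count_eq, letters, List.count_replicate]

theorem subset_of_mem_W {w : List ℕ} {a b c : ℕ} (hw : w ∈ W a b c) : w ⊆ [1, 2, 3] := by
  intro x hx
  have := (perm_letters_of_mem_W hw).subset hx
  simp only [letters, List.mem_append, List.mem_replicate] at this
  simp only [List.mem_cons, List.not_mem_nil, or_false]
  omega

def cyclicBalance (w : List ℕ) : ℚ :=
  ((countPairs 2 1 w - countPairs 1 2 w : ℚ) + (countPairs 3 2 w - countPairs 2 3 w)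
    + (countPairs 1 3 w - countPairs 3 1 w)) / 2

theorem cyclicBalance_cons_one (t : List ℕ) :
    cyclicBalance (1 :: t) = cyclicBalance t + (t.count 3 - t.count 2) / 2 := by
  simp [cyclicBalance]; ring

theorem cyclicBalance_cons_two (t : List ℕ) :
    cyclicBalance (2 :: t) = cyclicBalance t + (t.count 1 - t.count 3) / 2 := by
  simp [cyclicBalance]; ring

theorem cyclicBalance_cons_three (t : List ℕ) :
    cyclicBalance (3 :: t) = cyclicBalance t + (t.count 2 - t.count 1) / 2 := by
  simp [cyclicBalance]; ring

theorem gep_sub_eq_mul_cyclicBalance {w : List ℕ} {n : ℕ} (hw : w ∈ W n n n) :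
    (gep w : ℚ) - n ^ 3 / 2 = n * cyclicBalance w := by
  have h := two_mul_gep_eq (subset_of_mem_W hw)
  obtain ⟨h1, h2, h3⟩ := count_of_mem_W hw
  rw [h1, h2, h3] at h
  have hq := congrArg (Int.cast : ℤ → ℚ) h
  push_cast at hq
  rw [cyclicBalance]
  linear_combination hq / 2

def trinomial (a b c : ℕ) : ℚ :=
  (a + b + c).factorial / (a.factorial * b.factorial * c.factorial)

theorem trinomial_pos (a b c : ℕ) : 0 < trinomial a b c := by
  unfold trinomial; positivity

theorem trinomial_pred_left {a : ℕ} (b c : ℕ) (ha : a ≠ 0) :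
    trinomial (a - 1) b c = a * trinomial a b c / (a + b + c) := by
  obtain ⟨a, rfl⟩ := Nat.exists_eq_succ_of_ne_zero ha
  rw [trinomial, trinomial, Nat.succ_sub_one, show a + 1 + b + c = a + b + c + 1 by ring,
    Nat.factorial_succ, Nat.factorial_succ]
  push_cast
  field_simp
  ring

theorem trinomial_pred_mid (a : ℕ) {b : ℕ} (c : ℕ) (hb : b ≠ 0) :
    trinomial a (b - 1) c = b * trinomial a b c / (a + b + c) := by
  obtain ⟨b, rfl⟩ := Nat.exists_eq_succ_of_ne_zero hb
  rw [trinomial, trinomial, Nat.succ_sub_one, show a + (b + 1) + c = a + b + c + 1 by ring,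
    Nat.factorial_succ, Nat.factorial_succ]
  push_cast
  field_simp
  ring

theorem trinomial_pred_right (a b : ℕ) {c : ℕ} (hc : c ≠ 0) :
    trinomial a b (c - 1) = c * trinomial a b c / (a + b + c) := by
  obtain ⟨c, rfl⟩ := Nat.exists_eq_succ_of_ne_zero hc
  rw [trinomial, trinomial, Nat.succ_sub_one, show a + b + (c + 1) = a + b + c + 1 by ring,
    Nat.factorial_succ, Nat.factorial_succ]
  push_cast
  field_simp
  ring

theorem sum_pow_eq_of_forall_eq_add {ι R : Type*} [CommRing R] {s : Finset ι} {f g : ι → R}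
    {d N : R} {Q : ℕ → R} {k : ℕ} (hfg : ∀ i ∈ s, f i = g i + d)
    (hg : ∀ j ≤ k, ∑ i ∈ s, g i ^ j = N * Q j) :
    ∑ i ∈ s, f i ^ k = N * ∑ j ∈ range (k + 1), k.choose j * d ^ (k - j) * Q j := by
  calc ∑ i ∈ s, f i ^ k
      = ∑ j ∈ range (k + 1), (∑ i ∈ s, g i ^ j) * d ^ (k - j) * k.choose j := by
        simp_rw [sum_mul]
        rw [sum_comm]
        exact sum_congr rfl fun i hi => by rw [hfg i hi, add_pow]
    _ = N * ∑ j ∈ range (k + 1), k.choose j * d ^ (k - j) * Q j := by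
        rw [mul_sum]
        refine sum_congr rfl fun j hj => ?_
        rw [hg j (Nat.lt_succ_iff.mp (mem_range.mp hj))]
        ring

def variancePoly (a b c : ℚ) : ℚ :=
  ((a * b + b * c + c * a) * (a + b + c + 1) - 9 * a * b * c) / 12

def cumulant4Poly (s p q : ℚ) : ℚ :=
  (s * p ^ 2 - s ^ 3 * p + 33 * s ^ 2 * q - 81 * p * q
    + p ^ 2 - 2 * s ^ 2 * p + 18 * s * q - s * p - 15 * q) / 120

/-- Odd central moments vanish because reversing a word negates `cyclicBalance`; the even ones
were found by solving `centralMomentPoly_rec` degree by degree. -/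
def centralMomentPoly : ℕ → ℚ → ℚ → ℚ → ℚ
  | 0, _, _, _ => 1
  | 2, a, b, c => variancePoly a b c
  | 4, a, b, c =>
    3 * variancePoly a b c ^ 2 + cumulant4Poly (a + b + c) (a * b + b * c + c * a) (a * b * c)
  | _, _, _, _ => 0

theorem centralMomentPoly_rec {k : ℕ} (hk : k ≤ 4) (a b c : ℚ) :
    (a + b + c) * centralMomentPoly k a b c =
      a * ∑ j ∈ range (k + 1),
          k.choose j * ((c - b) / 2) ^ (k - j) * centralMomentPoly j (a - 1) b c
      + b * ∑ j ∈ range (k + 1),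
          k.choose j * ((a - c) / 2) ^ (k - j) * centralMomentPoly j a (b - 1) c
      + c * ∑ j ∈ range (k + 1),
          k.choose j * ((b - a) / 2) ^ (k - j) * centralMomentPoly j a b (c - 1) := by
  interval_cases k <;>
    simp [sum_range_succ, Nat.choose, centralMomentPoly, variancePoly, cumulant4Poly] <;> ring

theorem sum_cyclicBalance_pow {k : ℕ} (hk : k ≤ 4) (a b c : ℕ) :
    ∑ w ∈ W a b c, cyclicBalance w ^ k = trinomial a b c * centralMomentPoly k a b c := by
  induction hm : a + b + c generalizing a b c k with
  | zero =>
    obtain ⟨rfl, rfl, rfl⟩ : a = 0 ∧ b = 0 ∧ c = 0 := by omega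
    interval_cases k <;>
      simp [W, trinomial, cyclicBalance, centralMomentPoly, variancePoly, cumulant4Poly]
  | succ m ih =>
    set N := trinomial a b c
    have hs : (a + b + c : ℚ) ≠ 0 := by norm_cast; omega
    have hA : (if a = 0 then 0 else ∑ t ∈ W (a - 1) b c, cyclicBalance (1 :: t) ^ k) =
        a * N / (a + b + c) * ∑ j ∈ range (k + 1),
          k.choose j * ((c - b) / 2 : ℚ) ^ (k - j) * centralMomentPoly j (a - 1) b c := by
      split_ifs with ha
      · simp [ha]
      refine sum_pow_eq_of_forall_eq_add (g := cyclicBalance) (fun t ht => ?_) (fun j hj => ?_)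
      · rw [cyclicBalance_cons_one, (count_of_mem_W ht).2.1, (count_of_mem_W ht).2.2]
      · rw [ih (hj.trans hk) _ _ _ (by omega), trinomial_pred_left b c ha,
          Nat.cast_pred (Nat.pos_of_ne_zero ha)]
    have hB : (if b = 0 then 0 else ∑ t ∈ W a (b - 1) c, cyclicBalance (2 :: t) ^ k) =
        b * N / (a + b + c) * ∑ j ∈ range (k + 1),
          k.choose j * ((a - c) / 2 : ℚ) ^ (k - j) * centralMomentPoly j a (b - 1) c := by
      split_ifs with hb
      · simp [hb]
      refine sum_pow_eq_of_forall_eq_add (g := cyclicBalance) (fun t ht => ?_) (fun j hj => ?_)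
      · rw [cyclicBalance_cons_two, (count_of_mem_W ht).1, (count_of_mem_W ht).2.2]
      · rw [ih (hj.trans hk) _ _ _ (by omega), trinomial_pred_mid a c hb,
          Nat.cast_pred (Nat.pos_of_ne_zero hb)]
    have hC : (if c = 0 then 0 else ∑ t ∈ W a b (c - 1), cyclicBalance (3 :: t) ^ k) =
        c * N / (a + b + c) * ∑ j ∈ range (k + 1),
          k.choose j * ((b - a) / 2 : ℚ) ^ (k - j) * centralMomentPoly j a b (c - 1) := by
      split_ifs with hc
      · simp [hc]
      refine sum_pow_eq_of_forall_eq_add (g := cyclicBalance) (fun t ht => ?_) (fun j hj => ?_)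
      · rw [cyclicBalance_cons_three, (count_of_mem_W ht).1, (count_of_mem_W ht).2.1]
      · rw [ih (hj.trans hk) _ _ _ (by omega), trinomial_pred_right a b hc,
          Nat.cast_pred (Nat.pos_of_ne_zero hc)]
    rw [sum_W_eq_sum_cons _ (by omega), hA, hB, hC]
    field_simp
    linear_combination (-N) * centralMomentPoly_rec hk a b c

theorem gep_words_fourth_central_moment_general (n : ℕ) :
    (∑ w ∈ W n n n, ((gep w : ℚ) - (n : ℚ) ^ 3 / 2) ^ 4) / ((W n n n).card : ℚ) =
      (n : ℚ) ^ 7 * (21 * (n : ℚ) - 16) / 80 := by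
  have hcard : ((W n n n).card : ℚ) = trinomial n n n := by
    simpa [centralMomentPoly] using sum_cyclicBalance_pow (k := 0) (by norm_num) n n n
  have hcentered : ∑ w ∈ W n n n, ((gep w : ℚ) - n ^ 3 / 2) ^ 4 =
      n ^ 4 * ∑ w ∈ W n n n, cyclicBalance w ^ 4 := by
    rw [mul_sum]
    exact sum_congr rfl fun w hw => by rw [gep_sub_eq_mul_cyclicBalance hw, mul_pow]
  rw [hcentered, sum_cyclicBalance_pow le_rfl, hcard, mul_left_comm,
    mul_div_cancel_left₀ _ (trinomial_pos n n n).ne']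
  simp only [centralMomentPoly, variancePoly, cumulant4Poly]
  ring

theorem gep_words_fourth_central_moment (n : ℕ) (hn : 1 ≤ n) :
    (∑ w ∈ W n n n, ((gep w : ℚ) - (n : ℚ) ^ 3 / 2) ^ 4) / ((W n n n).card : ℚ) =
      (n : ℚ) ^ 7 * (21 * (n : ℚ) - 16) / 80 :=
  gep_words_fourth_central_moment_general n
end
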